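/- arXiv:1407.8379 — 2 statements merged into one kernel-verified Lean document; each statement's English description precedes it below -/
import Mathlib

section
/- Let μ be a finite Borel measure on ℝ, ν > 0, J > 0, S > 0, K̂(z) = -(z/J + iν + M̂(z))^{-1} with M̂(z) = ∫(λ-z)^{-1}dμ(λ), and Ŝ(z) = -(z/S + K̂(z)/S²)^{-1}. Then for each ω ≠ 0 real, limsup_{η ↓ 0} Im Ŝ(ω + iη) < ∞. -/
/-!
Since `Im M̂ ≥ 0` on the upper half plane, `D = z/J + iν + M̂(z)` has `Im D ≥ ν`, so
`K̂ = -D⁻¹` satisfies `ν‖K̂‖² ≤ Im K̂`. For `z = ω + iη` this keeps the denominator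
`z/S + K̂/S²` of `Ŝ` away from `0` uniformly in `η > 0`: when `‖K̂‖` is small its real part
stays near `ω/S`, and otherwise its imaginary part is at least `ν‖K̂‖²/S² ≥ νω²/4`.
Hence `Im Ŝ ≤ ‖Ŝ‖` is bounded.
-/

open MeasureTheory Complex Filter

namespace Complex

lemma im_neg_inv (w : ℂ) : (-w⁻¹).im = w.im / normSq w := by
  rw [neg_im, inv_im, neg_div, neg_neg]

lemma mul_sq_norm_neg_inv_le_im {a : ℝ} {w : ℂ} (ha : a ≤ w.im) :
    a * ‖-w⁻¹‖ ^ 2 ≤ (-w⁻¹).im := by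
  rw [im_neg_inv, norm_neg, norm_inv, inv_pow, Complex.sq_norm, ← div_eq_mul_inv]
  exact div_le_div_of_nonneg_right ha (normSq_nonneg w)

lemma min_le_norm_of_mul_sq_norm_le_im {a ω η : ℝ} {w : ℂ} (ha : 0 ≤ a) (hη : 0 ≤ η)
    (hw : a * ‖w‖ ^ 2 ≤ w.im) :
    min (|ω| / 2) (a * ω ^ 2 / 4) ≤ ‖(ω : ℂ) + I * η + w‖ := by
  set v : ℂ := (ω : ℂ) + I * η + w
  have hre : v.re = ω + w.re := by simp [v]
  have him : v.im = η + w.im := by simp [v]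
  rcases le_or_gt ‖w‖ (|ω| / 2) with hsmall | hlarge
  · have : |ω| / 2 ≤ |v.re| := by
      have hwre := (abs_re_le_norm w).trans hsmall
      have htri := abs_sub (ω + w.re) w.re
      rw [add_sub_cancel_right] at htri
      rw [hre]
      linarith
    exact (min_le_left _ _).trans (this.trans (abs_re_le_norm v))
  · have : a * ω ^ 2 / 4 ≤ v.im := by
      have hsq : (|ω| / 2) ^ 2 ≤ ‖w‖ ^ 2 := pow_le_pow_left₀ (by positivity) hlarge.le 2
      rw [div_pow, sq_abs] at hsq
      nlinarith [mul_le_mul_of_nonneg_left hsq ha]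
    exact (min_le_right _ _).trans (this.trans (im_le_norm v))

lemma mul_sq_norm_div_ofReal_le_im {a r : ℝ} {w : ℂ} (hr : 0 < r)
    (hw : a * ‖w‖ ^ 2 ≤ w.im) : a * r * ‖w / r‖ ^ 2 ≤ (w / r).im := by
  rw [div_ofReal_im, norm_div, norm_real, Real.norm_of_nonneg hr.le, le_div_iff₀ hr]
  refine le_of_eq_of_le ?_ hw
  field_simp

end Complex

lemma im_integral_inv_ofReal_sub_nonneg (μ : Measure ℝ) {z : ℂ} (hz : 0 ≤ z.im) :
    0 ≤ (∫ x, ((x : ℂ) - z)⁻¹ ∂μ).im := by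
  by_cases hint : Integrable (fun x : ℝ => ((x : ℂ) - z)⁻¹) μ
  · rw [← RCLike.im_to_complex, ← integral_im hint]
    refine integral_nonneg fun x => ?_
    simp only [Pi.zero_apply, RCLike.im_to_complex, inv_im, sub_im, ofReal_im, zero_sub, neg_neg]
    exact div_nonneg hz (normSq_nonneg _)
  · simp [integral_undef hint]

theorem stmt_13_general (μ : Measure ℝ) (ν J S : ℝ)
    (hν : 0 < ν) (hJ : 0 < J) (hSpos : 0 < S)
    (Mhat Khat Shat : ℂ → ℂ)
    (hM : ∀ z : ℂ, 0 < z.im → Mhat z = ∫ lam : ℝ, ((lam : ℂ) - z)⁻¹ ∂μ)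
    (hK : ∀ z : ℂ, 0 < z.im → Khat z = -(z / J + Complex.I * ν + Mhat z)⁻¹)
    (hSh : ∀ z : ℂ, 0 < z.im → Shat z = -(z / S + Khat z / (S ^ 2))⁻¹)
    (ω : ℝ) (hω : ω ≠ 0) :
    IsBoundedUnder (· ≤ ·) (nhdsWithin (0:ℝ) (Set.Ioi 0))
      (fun η : ℝ => (Shat (ω + Complex.I * η)).im) := by
  set c : ℝ := min (|ω / S| / 2) (ν * S ^ 2 * (ω / S) ^ 2 / 4)
  have hc : 0 < c := lt_min (by positivity) (by positivity)
  refine ⟨c⁻¹, eventually_map.2 (eventually_nhdsWithin_of_forall fun η (hη : 0 < η) => ?_)⟩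
  set z : ℂ := ω + I * η
  have hz : 0 < z.im := by simpa [z] using hη
  have hD : ν ≤ (z / J + I * ν + Mhat z).im := by
    have hMz := im_integral_inv_ofReal_sub_nonneg μ hz.le
    rw [← hM z hz] at hMz
    have : 0 ≤ z.im / J := by positivity
    simp only [add_im, div_ofReal_im, mul_im, I_re, I_im, ofReal_re, ofReal_im]
    linarith
  have hK' : ν * ‖Khat z‖ ^ 2 ≤ (Khat z).im := hK z hz ▸ mul_sq_norm_neg_inv_le_im hD
  have hS2 : (S : ℂ) ^ 2 = ((S ^ 2 : ℝ) : ℂ) := by push_cast; rfl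
  have hw : ν * S ^ 2 * ‖Khat z / (S : ℂ) ^ 2‖ ^ 2 ≤ (Khat z / (S : ℂ) ^ 2).im :=
    hS2 ▸ mul_sq_norm_div_ofReal_le_im (by positivity) hK'
  have hE : c ≤ ‖z / S + Khat z / (S : ℂ) ^ 2‖ := by
    convert min_le_norm_of_mul_sq_norm_le_im (ω := ω / S) (η := η / S) (by positivity)
      (by positivity) hw using 2
    simp only [z]; push_cast; ring
  calc (Shat z).im ≤ ‖Shat z‖ := im_le_norm _
    _ = ‖z / S + Khat z / (S : ℂ) ^ 2‖⁻¹ := by rw [hSh z hz, norm_neg, norm_inv]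
    _ ≤ c⁻¹ := inv_anti₀ hc hE

theorem stmt_13 (μ : Measure ℝ) [IsFiniteMeasure μ] (ν J S : ℝ)
    (hν : 0 < ν) (hJ : 0 < J) (hSpos : 0 < S)
    (Mhat Khat Shat : ℂ → ℂ)
    (hM : ∀ z : ℂ, 0 < z.im → Mhat z = ∫ lam : ℝ, ((lam : ℂ) - z)⁻¹ ∂μ)
    (hK : ∀ z : ℂ, 0 < z.im → Khat z = -(z / J + Complex.I * ν + Mhat z)⁻¹)
    (hSh : ∀ z : ℂ, 0 < z.im → Shat z = -(z / S + Khat z / (S ^ 2))⁻¹)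
    (ω : ℝ) (hω : ω ≠ 0) :
    IsBoundedUnder (· ≤ ·) (nhdsWithin (0:ℝ) (Set.Ioi 0))
      (fun η : ℝ => (Shat (ω + Complex.I * η)).im) :=
  stmt_13_general μ ν J S hν hJ hSpos Mhat Khat Shat hM hK hSh ω hω
end

section
/- Let κ be a finite Borel measure on ℝ with J = κ(ℝ) > 0 and K̂(z) = ∫ (ω-z)^{-1} dκ(ω) nonvanishing on the upper half plane, and let ν > 0. Define M̂(z) by iν + M̂(z) = -z/J - K̂(z)^{-1}. Then ν + Im M̂(z) ≥ 0 for all z in the upper half plane. -/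
/-!
Write `f ω = (ω - z)⁻¹`, so `K̂ z = ∫ f dκ`. Since `Im f = Im z · |f|²`, we get
`Im K̂ z = Im z · ∫ |f|² dκ`, while `|K̂ z|² ≤ (∫ |f| dκ)² ≤ J ∫ |f|² dκ` by Cauchy–Schwarz
(Jensen for `x ↦ x²`). Together, `Im z · |K̂ z|² ≤ J · Im K̂ z`, which is exactly
`ν + Im M̂ z = Im K̂ z / |K̂ z|² - Im z / J ≥ 0`.
-/

open MeasureTheory Complex

theorem sq_integral_le_measureReal_univ_mul_integral_sq {α : Type*} [MeasurableSpace α]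
    {μ : Measure α} [IsFiniteMeasure μ] {g : α → ℝ} (hg : Integrable g μ)
    (hg2 : Integrable (fun x ↦ g x ^ 2) μ) :
    (∫ x, g x ∂μ) ^ 2 ≤ μ.real Set.univ * ∫ x, g x ^ 2 ∂μ := by
  rcases eq_zero_or_neZero μ with rfl | _
  · simp
  have hμ : 0 < μ.real Set.univ := measureReal_univ_pos
  have jensen : (⨍ x, g x ∂μ) ^ 2 ≤ ⨍ x, g x ^ 2 ∂μ :=
    (Even.convexOn_pow even_two).map_average_le (continuous_pow 2).continuousOn isClosed_univ
      (by simp) hg hg2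
  rw [average_eq, average_eq, smul_eq_mul, smul_eq_mul, mul_pow, inv_pow] at jensen
  field_simp at jensen
  linarith

theorem im_inv_ofReal_sub (z : ℂ) (ω : ℝ) :
    ((ω : ℂ) - z)⁻¹.im = z.im * ‖((ω : ℂ) - z)⁻¹‖ ^ 2 := by
  rw [inv_im, norm_inv, inv_pow, Complex.sq_norm]
  simp [div_eq_mul_inv]

section CauchyKernel

variable {z : ℂ}

theorem norm_inv_ofReal_sub_le (hz : 0 < z.im) (ω : ℝ) : ‖((ω : ℂ) - z)⁻¹‖ ≤ z.im⁻¹ := by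
  rw [norm_inv]
  refine inv_anti₀ hz ?_
  exact (le_abs_self _).trans (by simpa using abs_im_le_norm ((ω : ℂ) - z))

theorem integrable_inv_ofReal_sub (κ : Measure ℝ) [IsFiniteMeasure κ] (hz : 0 < z.im) :
    Integrable (fun ω : ℝ ↦ ((ω : ℂ) - z)⁻¹) κ :=
  .of_bound (by fun_prop) _ (.of_forall (norm_inv_ofReal_sub_le hz))

end CauchyKernel

noncomputable def stieltjes (κ : Measure ℝ) (z : ℂ) : ℂ := ∫ ω, ((ω : ℂ) - z)⁻¹ ∂κ

section Stieltjes

variable (κ : Measure ℝ) [IsFiniteMeasure κ] {z : ℂ}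

theorem integrable_norm_inv_ofReal_sub_sq (hz : 0 < z.im) :
    Integrable (fun ω : ℝ ↦ ‖((ω : ℂ) - z)⁻¹‖ ^ 2) κ :=
  .of_bound (by fun_prop) (z.im⁻¹ ^ 2) <| .of_forall fun ω ↦ by
    rw [norm_pow, norm_norm]
    exact pow_le_pow_left₀ (norm_nonneg _) (norm_inv_ofReal_sub_le hz ω) 2

theorem im_stieltjes (hz : 0 < z.im) :
    (stieltjes κ z).im = z.im * ∫ ω, ‖((ω : ℂ) - z)⁻¹‖ ^ 2 ∂κ := by
  rw [stieltjes, ← integral_const_mul]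
  simp_rw [← im_inv_ofReal_sub]
  exact (integral_im (integrable_inv_ofReal_sub κ hz)).symm

theorem normSq_stieltjes_le (hz : 0 < z.im) :
    normSq (stieltjes κ z) ≤ κ.real Set.univ * ∫ ω, ‖((ω : ℂ) - z)⁻¹‖ ^ 2 ∂κ := by
  have hf := integrable_inv_ofReal_sub κ hz
  calc normSq (stieltjes κ z) = ‖stieltjes κ z‖ ^ 2 := (Complex.sq_norm _).symm
    _ ≤ (∫ ω, ‖((ω : ℂ) - z)⁻¹‖ ∂κ) ^ 2 := by
        gcongr; exact norm_integral_le_integral_norm _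
    _ ≤ _ := sq_integral_le_measureReal_univ_mul_integral_sq hf.norm
        (integrable_norm_inv_ofReal_sub_sq κ hz)

theorem im_mul_normSq_stieltjes_le (hz : 0 < z.im) :
    z.im * normSq (stieltjes κ z) ≤ κ.real Set.univ * (stieltjes κ z).im := by
  rw [im_stieltjes κ hz, mul_left_comm]
  exact mul_le_mul_of_nonneg_left (normSq_stieltjes_le κ hz) hz.le

end Stieltjes

theorem stmt_19_general (κ : Measure ℝ) [IsFiniteMeasure κ] (J : ℝ)
    (hJ : J = (κ Set.univ).toReal) (hJpos : 0 < J) (ν : ℝ)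
    (Khat : ℂ → ℂ)
    (hK : ∀ z : ℂ, 0 < z.im → Khat z = ∫ ω : ℝ, ((ω : ℂ) - z)⁻¹ ∂κ)
    (hK0 : ∀ z : ℂ, 0 < z.im → Khat z ≠ 0)
    (Mhat : ℂ → ℂ)
    (hM : ∀ z : ℂ, 0 < z.im → Mhat z = -z / J - (Khat z)⁻¹ - Complex.I * ν) :
    ∀ z : ℂ, 0 < z.im → 0 ≤ ν + (Mhat z).im := by
  intro z hz
  have hKz : Khat z = stieltjes κ z := hK z hz
  have hKpos : 0 < normSq (Khat z) := normSq_pos.mpr (hK0 z hz)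
  have hKim := im_mul_normSq_stieltjes_le κ hz
  rw [← hKz, measureReal_def, ← hJ] at hKim
  have hMim : ν + (Mhat z).im = (Khat z).im / normSq (Khat z) - z.im / J := by
    rw [hM z hz]
    simp only [sub_im, div_ofReal_im, neg_im, inv_im, mul_im, I_re, I_im, ofReal_re, ofReal_im]
    ring
  rw [hMim, sub_nonneg, div_le_div_iff₀ hJpos hKpos]
  linarith

theorem stmt_19 (κ : Measure ℝ) [IsFiniteMeasure κ] (J : ℝ)
    (hJ : J = (κ Set.univ).toReal) (hJpos : 0 < J) (ν : ℝ) (hν : 0 < ν)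
    (Khat : ℂ → ℂ)
    (hK : ∀ z : ℂ, 0 < z.im → Khat z = ∫ ω : ℝ, ((ω : ℂ) - z)⁻¹ ∂κ)
    (hK0 : ∀ z : ℂ, 0 < z.im → Khat z ≠ 0)
    (Mhat : ℂ → ℂ)
    (hM : ∀ z : ℂ, 0 < z.im → Mhat z = -z / J - (Khat z)⁻¹ - Complex.I * ν) :
    ∀ z : ℂ, 0 < z.im → 0 ≤ ν + (Mhat z).im :=
  stmt_19_general κ J hJ hJpos ν Khat hK hK0 Mhat hM
end
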